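/- Let d ≥ 1 and let G_d ∈ ℂ[[z,t]] be the power series (1−t²)·∏_{m=0}^{d}(1−z·t^{2m})^{−1} = (1−t²)/((1−z)(1−z·t²)⋯(1−z·t^{2d})). Then the bivariate Poincaré series of the algebra of covariants of the binary d-form satisfies P_d(z,t) = Ψ_d(G_d); that is, for all i,m ∈ ℕ, the coefficient of z^i t^m in P_d equals the coefficient of z^i t^{d·i−m} in G_d when m ≤ d·i, and equals 0 when m > d·i. -/

import Mathlib

/-
The coefficient of `z^i t^j` in `∏ₖ (1 - z t^{2k})⁻¹` counts the monomials of degree `i` and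
weight `j / 2`, i.e. it is `dim W_{i,N}` for `j = 2N` and `0` for odd `j`; the factor `1 - t²`
turns it into `dim W_{i,N} - dim W_{i,N-1}`.

On the other side `D₁` and `D₂ : x_k ↦ (d - k) x_{k+1}` satisfy `[D₁, D₂] = d i - 2N` on
`W_{i,N}`. As for `sl₂`, peeling off `D₁` shows that every eigenvalue of `D₁ D₂` on `W_{i,N}` is a
sum of the positive numbers `d i - 2M`, `M ≤ N`, when `2N < d i`. Hence `D₁ D₂` is invertible on
`W_{i,N}`, `D₁ : W_{i,N+1} → W_{i,N}` is onto, and rank–nullity gives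
`dim (W_{i,N} ∩ ker D₁) = dim W_{i,N} - dim W_{i,N-1}` whenever `2N ≤ d i`.
-/

noncomputable def Wspace (d i N : ℕ) : Submodule ℂ (MvPolynomial (Fin (d + 1)) ℂ) :=
  Submodule.span ℂ { p | ∃ α : Fin (d + 1) →₀ ℕ,
    (∑ k, α k) = i ∧ (∑ k : Fin (d + 1), (k : ℕ) * α k) = N ∧
    p = MvPolynomial.monomial α 1 }

noncomputable def D1 (d : ℕ) :
    Derivation ℂ (MvPolynomial (Fin (d + 1)) ℂ) (MvPolynomial (Fin (d + 1)) ℂ) :=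
  MvPolynomial.mkDerivation ℂ (fun k =>
    if _h : 0 < (k : ℕ) then
      ((k : ℕ) : ℂ) •
        MvPolynomial.X (⟨(k : ℕ) - 1, lt_of_le_of_lt (Nat.sub_le _ _) k.isLt⟩ : Fin (d + 1))
    else 0)

/-- γ_d(i,j), extended by 0 when j > d·i or d·i − j is odd. -/
noncomputable def gammaC (d i j : ℕ) : ℕ :=
  if j ≤ d * i ∧ (d * i - j) % 2 = 0 then
    Module.finrank ℂ
      ↥(Wspace d i ((d * i - j) / 2) ⊓ LinearMap.ker (D1 d).toLinearMap)
  else 0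

open Finset Finsupp

lemma Finsupp.exists_eq_single_zero_add_single_one (e : Fin 2 →₀ ℕ) :
    ∃ a b, e = single 0 a + single 1 b :=
  ⟨e 0, e 1, by ext k; fin_cases k <;> simp⟩

namespace MvPowerSeries

variable {K : Type*} [Field K]

theorem coeff_inv_one_sub_X_mul_X_pow (n : ℕ) (e : Fin 2 →₀ ℕ) :
    coeff e ((1 - X 0 * X 1 ^ n : MvPowerSeries (Fin 2) K)⁻¹) = if e 1 = n * e 0 then 1 else 0 := by
  let g : MvPowerSeries (Fin 2) K := fun e => if e 1 = n * e 0 then 1 else 0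
  have hg (e : Fin 2 →₀ ℕ) : coeff e g = if e 1 = n * e 0 then 1 else 0 := rfl
  suffices (1 - X 0 * X 1 ^ n : MvPowerSeries (Fin 2) K)⁻¹ = g from congrArg (coeff e) this
  rw [MvPowerSeries.inv_eq_iff_mul_eq_one (by simp), mul_comm, X_pow_eq, X, monomial_mul_monomial,
    one_mul]
  ext e
  obtain ⟨a, b, rfl⟩ := e.exists_eq_single_zero_add_single_one
  rw [sub_mul, one_mul, map_sub, coeff_monomial_mul, coeff_one]
  simp only [hg]
  simp only [Fin.isValue, Finsupp.coe_add, Pi.add_apply, ne_eq, one_ne_zero, not_false_eq_true,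
    single_eq_of_ne, single_eq_same, zero_add, zero_ne_one, add_zero, le_def, Fin.forall_fin_two,
    coe_tsub, Pi.sub_apply, Nat.mul_sub_one, mul_ite, mul_one, mul_zero, add_eq_zero,
    Finsupp.ext_iff, Finsupp.coe_zero, Pi.zero_apply, and_true, true_and]
  have h₀ : a = 0 → n * a = 0 := fun h => by rw [h, mul_zero]
  have h₁ : 0 < a → n ≤ n * a := Nat.le_mul_of_pos_right n
  split_ifs <;> first | omega | norm_num

theorem coeff_prod_inv_one_sub_X_mul_X_pow {ι : Type*} [Fintype ι] [DecidableEq ι]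
    (w : ι → ℕ) (i j : ℕ) :
    coeff (single 0 i + single 1 j) (∏ k, (1 - X 0 * X 1 ^ w k : MvPowerSeries (Fin 2) K)⁻¹) =
      #{α ∈ finsuppAntidiag univ i | ∑ k, w k * α k = j} := by
  rw [coeff_prod]
  simp_rw [coeff_inv_one_sub_X_mul_X_pow, Fintype.prod_boole, Finset.sum_boole]
  congr 1
  refine card_nbij' (fun l : ι →₀ Fin 2 →₀ ℕ => equivFunOnFinite.symm fun k => l k 0)
    (fun α => equivFunOnFinite.symm fun k => single 0 (α k) + single 1 (w k * α k))
    ?_ ?_ ?_ ?_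
  · intro l hl
    simp only [coe_filter, mem_finsuppAntidiag, subset_univ, and_true, Set.mem_ofPred_eq] at hl ⊢
    obtain ⟨hsum, hray⟩ := hl
    have h0 := congrArg (· 0) hsum
    have h1 := congrArg (· 1) hsum
    simp only [Finsupp.finsetSum_apply, hray] at h0 h1
    simp only [equivFunOnFinite_symm_apply_apply]
    simp only [Finsupp.add_apply, single_eq_same, ne_eq, zero_ne_one, not_false_eq_true,
      single_eq_of_ne, one_ne_zero, add_zero, zero_add] at h0 h1
    exact ⟨h0, h1⟩
  · intro α hα
    simp only [coe_filter, mem_finsuppAntidiag, subset_univ, and_true, Set.mem_ofPred_eq] at hα ⊢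
    refine ⟨?_, fun k => by simp⟩
    ext a
    fin_cases a <;> simp [Finsupp.finsetSum_apply, ← hα.1, ← hα.2]
  · intro l hl
    simp only [coe_filter, mem_finsuppAntidiag, subset_univ, and_true, Set.mem_ofPred_eq] at hl
    ext k a
    fin_cases a <;> simp [hl.2]
  · intro α hα
    ext k
    simp

theorem coeff_one_sub_X_one_pow_mul (f : MvPowerSeries (Fin 2) K) (n i j : ℕ) :
    coeff (single 0 i + single 1 j) ((1 - X 1 ^ n) * f) =
      coeff (single 0 i + single 1 j) f -
        if n ≤ j then coeff (single 0 i + single 1 (j - n)) f else 0 := by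
  rw [sub_mul, one_mul, map_sub, X_pow_eq, coeff_monomial_mul, one_mul]
  have hle : single (1 : Fin 2) n ≤ single 0 i + single 1 j ↔ n ≤ j := by
    simp [Finsupp.le_def, Fin.forall_fin_two]
  have hsub : single 0 i + single 1 j - single (1 : Fin 2) n = single 0 i + single 1 (j - n) := by
    ext a
    fin_cases a <;> simp
  simp only [hle, hsub]

end MvPowerSeries

namespace MvPolynomial

variable {R σ M : Type*} [CommSemiring R] [AddCommMonoid M] {w : σ → M}

lemma IsWeightedHomogeneous.derivation_apply
    {D : Derivation R (MvPolynomial σ R) (MvPolynomial σ R)} {δ m : M}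
    (hD : ∀ k, (D (X k)).IsWeightedHomogeneous w (w k + δ)) {p : MvPolynomial σ R}
    (hp : p.IsWeightedHomogeneous w m) : (D p).IsWeightedHomogeneous w (m + δ) := by
  have hD' : D = mkDerivation R (fun k => D (X k)) := derivation_ext (by simp)
  induction hp using IsWeightedHomogeneous.induction_on with
  | zero => simpa using isWeightedHomogeneous_zero R w (m + δ)
  | add p q _ _ hp hq => simpa using hp.add hq
  | monomial α r hα =>
    rw [hD', mkDerivation_monomial]
    refine (weightedHomogeneousSubmodule R w _).smul_mem r
      (IsWeightedHomogeneous.sum _ _ _ fun k hk => ?_)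
    dsimp only
    rw [smul_eq_mul, ← hα, ← weight_sub_single_add (Finsupp.mem_support_iff.mp hk), add_assoc]
    exact (isWeightedHomogeneous_monomial _ _ _ rfl).mul (hD k)

lemma IsWeightedHomogeneous.derivation_apply_eq_smul (φ : M →+ R)
    {D : Derivation R (MvPolynomial σ R) (MvPolynomial σ R)}
    (hD : ∀ k, D (X k) = φ (w k) • X k) {p : MvPolynomial σ R} {m : M}
    (hp : p.IsWeightedHomogeneous w m) : D p = φ m • p := by
  have hD' : D = mkDerivation R (fun k => D (X k)) := derivation_ext (by simp)
  induction hp using IsWeightedHomogeneous.induction_on with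
  | zero => simp
  | add p q _ _ hp hq => rw [map_add, hp, hq, smul_add]
  | monomial α r hα =>
    have hterm : ∀ k ∈ α.support,
        monomial (α - single k 1) (α k : R) • D (X k) = (α k • φ (w k)) • monomial α 1 := by
      intro k hk
      rw [hD k, smul_eq_mul, mul_smul_comm, X, monomial_mul, mul_one,
        sub_add_single_one_cancel (Finsupp.mem_support_iff.mp hk), smul_monomial, smul_monomial,
        smul_eq_mul, smul_eq_mul, nsmul_eq_mul, mul_one, mul_comm]
    rw [hD', mkDerivation_monomial, Finsupp.sum, Finset.sum_congr rfl hterm, ← Finset.sum_smul,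
      ← hα, weight_apply, map_finsuppSum]
    simp only [map_nsmul, smul_monomial, smul_eq_mul, Finsupp.sum, one_mul, mul_comm]

end MvPolynomial

section Lowering

variable {K V : Type*} [Field K] [AddCommGroup V] [Module K V]
  {E F : Module.End K V} {W : ℕ → Submodule K V} {c : ℕ → ℤ}

theorem exists_pos_int_eq_of_apply_apply_eq_smul (hE : ∀ m, ∀ v ∈ W (m + 1), E v ∈ W m)
    (hE₀ : ∀ v ∈ W 0, E v = 0) (hEF : ∀ m, ∀ v ∈ W m, E (F v) - F (E v) = (c m : K) • v)
    {m : ℕ} (hc : ∀ m' ≤ m, 0 < c m') {μ : K} {v : V} (hv : v ∈ W m) (hv₀ : v ≠ 0)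
    (hμ : E (F v) = μ • v) : ∃ n : ℤ, 0 < n ∧ μ = n := by
  induction m generalizing μ v with
  | zero =>
    refine ⟨c 0, hc 0 le_rfl, ?_⟩
    have := hEF 0 v hv
    rw [hE₀ v hv, map_zero, sub_zero, hμ] at this
    exact smul_left_injective K hv₀ this
  | succ m ih =>
    -- `E v` is an eigenvector of `E F` on `W m` for `μ - c (m + 1)`, unless it vanishes
    have hFE : F (E v) = (μ - c (m + 1)) • v := by
      rw [sub_smul, ← hμ, ← hEF (m + 1) v hv, sub_sub_cancel]
    by_cases hEv : E v = 0
    · refine ⟨c (m + 1), hc _ le_rfl, ?_⟩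
      rw [hEv, map_zero, eq_comm, smul_eq_zero, sub_eq_zero] at hFE
      exact hFE.resolve_right hv₀
    · obtain ⟨n, hn, hμn⟩ := ih (fun m' hm' => hc m' (by omega)) (hE m v hv) hEv
        (by rw [hFE, map_smul])
      refine ⟨n + c (m + 1), add_pos hn (hc _ le_rfl), ?_⟩
      rw [Int.cast_add, ← hμn, sub_add_cancel]

theorem surjOn_of_apply_apply_sub_apply_apply_eq_smul [CharZero K]
    (hE : ∀ m, ∀ v ∈ W (m + 1), E v ∈ W m) (hE₀ : ∀ v ∈ W 0, E v = 0)
    (hF : ∀ m, ∀ v ∈ W m, F v ∈ W (m + 1))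
    (hEF : ∀ m, ∀ v ∈ W m, E (F v) - F (E v) = (c m : K) • v)
    {m : ℕ} [FiniteDimensional K (W m)] (hc : ∀ m' ≤ m, 0 < c m') :
    Set.SurjOn E (W (m + 1)) (W m) := by
  let T : Module.End K (W m) := (E ∘ₗ F).restrict fun v hv => hE m _ (hF m v hv)
  have hT : Function.Injective T := by
    rw [← LinearMap.ker_eq_bot, Submodule.eq_bot_iff]
    intro v hv
    by_contra hv₀
    obtain ⟨n, hn, h0⟩ := exists_pos_int_eq_of_apply_apply_eq_smul hE hE₀ hEF hc v.2
      (fun h => hv₀ (Subtype.ext h)) (by rw [zero_smul]; exact congrArg Subtype.val hv)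
    exact hn.ne' (by exact_mod_cast h0.symm)
  intro u hu
  obtain ⟨v, hv⟩ := LinearMap.injective_iff_surjective.mp hT ⟨u, hu⟩
  exact ⟨F v, hF m v v.2, congrArg Subtype.val hv⟩

theorem finrank_inf_ker_add_finrank [CharZero K] (hE : ∀ m, ∀ v ∈ W (m + 1), E v ∈ W m)
    (hE₀ : ∀ v ∈ W 0, E v = 0) (hF : ∀ m, ∀ v ∈ W m, F v ∈ W (m + 1))
    (hEF : ∀ m, ∀ v ∈ W m, E (F v) - F (E v) = (c m : K) • v)
    {m : ℕ} [FiniteDimensional K (W m)] [FiniteDimensional K (W (m + 1))]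
    (hc : ∀ m' ≤ m, 0 < c m') :
    Module.finrank K ↥(W (m + 1) ⊓ LinearMap.ker E) + Module.finrank K (W m) =
      Module.finrank K (W (m + 1)) := by
  let E' : W (m + 1) →ₗ[K] W m := E.restrict (hE m)
  have hsurj : Function.Surjective E' := fun u => by
    obtain ⟨v, hv, hvu⟩ := surjOn_of_apply_apply_sub_apply_apply_eq_smul hE hE₀ hF hEF hc u.2
    exact ⟨⟨v, hv⟩, Subtype.ext hvu⟩
  have hker : Module.finrank K (LinearMap.ker E') =
      Module.finrank K ↥(W (m + 1) ⊓ LinearMap.ker E) := by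
    rw [LinearMap.ker_restrict, ← top_inf_eq (Submodule.comap _ _), ← Submodule.comap_subtype_self,
      ← Submodule.comap_inf]
    exact (Submodule.comapSubtypeEquivOfLe inf_le_left).finrank_eq
  rw [← hker, ← LinearMap.finrank_range_add_finrank_ker E', LinearMap.range_eq_top.mpr hsurj,
    finrank_top, add_comm]

end Lowering

noncomputable def degreeWeightMonomials (d i N : ℕ) : Finset (Fin (d + 1) →₀ ℕ) :=
  {α ∈ finsuppAntidiag univ i | ∑ k : Fin (d + 1), (k : ℕ) * α k = N}

section Coefficients

open MvPowerSeries

lemma coeff_prod_inv_one_sub_X_mul_X_pow_two_mul (d i N : ℕ) :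
    coeff (single 0 i + single 1 (2 * N))
        (∏ k ∈ range (d + 1), (1 - X 0 * X 1 ^ (2 * k) : MvPowerSeries (Fin 2) ℂ)⁻¹) =
      #(degreeWeightMonomials d i N) := by
  rw [← Fin.prod_univ_eq_prod_range (fun k => (1 - X 0 * X 1 ^ (2 * k))⁻¹),
    coeff_prod_inv_one_sub_X_mul_X_pow (fun k : Fin (d + 1) => 2 * (k : ℕ)), degreeWeightMonomials]
  congr 2
  refine filter_congr fun α _ => ?_
  simp_rw [mul_assoc, ← Finset.mul_sum]
  omega

lemma coeff_prod_inv_one_sub_X_mul_X_pow_two_mul_add_one (d i N : ℕ) :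
    coeff (single 0 i + single 1 (2 * N + 1))
        (∏ k ∈ range (d + 1), (1 - X 0 * X 1 ^ (2 * k) : MvPowerSeries (Fin 2) ℂ)⁻¹) = 0 := by
  rw [← Fin.prod_univ_eq_prod_range (fun k => (1 - X 0 * X 1 ^ (2 * k))⁻¹),
    coeff_prod_inv_one_sub_X_mul_X_pow (fun k : Fin (d + 1) => 2 * (k : ℕ)), Nat.cast_eq_zero,
    card_eq_zero, filter_eq_empty_iff]
  intro α _
  simp_rw [mul_assoc, ← Finset.mul_sum]
  omega

end Coefficients

open MvPolynomial

-- The weight coordinate lives in `ℤ` so that `D1` can shift it by `-1`.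
def degreeWeight (d : ℕ) (k : Fin (d + 1)) : ℕ × ℤ := (1, k)

noncomputable def D2 (d : ℕ) :
    Derivation ℂ (MvPolynomial (Fin (d + 1)) ℂ) (MvPolynomial (Fin (d + 1)) ℂ) :=
  mkDerivation ℂ fun k =>
    if h : (k : ℕ) < d then ((d : ℂ) - k) • X (⟨k + 1, by omega⟩ : Fin (d + 1)) else 0

section Wspace

variable {d i N : ℕ}

lemma mem_degreeWeightMonomials {α : Fin (d + 1) →₀ ℕ} :
    α ∈ degreeWeightMonomials d i N ↔ ∑ k, α k = i ∧ ∑ k : Fin (d + 1), (k : ℕ) * α k = N := by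
  simp [degreeWeightMonomials]

lemma weight_degreeWeight_eq_iff {α : Fin (d + 1) →₀ ℕ} :
    weight (degreeWeight d) α = (i, (N : ℤ)) ↔ α ∈ degreeWeightMonomials d i N := by
  rw [mem_degreeWeightMonomials, weight_eq_sum, Prod.ext_iff, Prod.fst_sum, Prod.snd_sum]
  simp only [degreeWeight, Prod.smul_mk, smul_eq_mul, nsmul_eq_mul, mul_comm]
  norm_cast
  simp only [one_mul]

lemma Wspace_eq_restrictSupport :
    Wspace d i N = restrictSupport ℂ ↑(degreeWeightMonomials d i N) := by
  rw [Wspace, restrictSupport_eq_span]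
  congr 1
  ext p
  simp only [Set.mem_ofPred_eq, Set.mem_image, mem_coe, mem_degreeWeightMonomials]
  grind

lemma Wspace_eq_weightedHomogeneousSubmodule :
    Wspace d i N = weightedHomogeneousSubmodule ℂ (degreeWeight d) (i, (N : ℤ)) := by
  rw [Wspace_eq_restrictSupport, weightedHomogeneousSubmodule_eq_finsupp_supported]
  congr 1
  ext α
  exact weight_degreeWeight_eq_iff.symm

instance : FiniteDimensional ℂ (Wspace d i N) := by
  rw [Wspace_eq_restrictSupport]
  exact Module.Finite.of_basis (basisRestrictSupport ℂ _)

lemma finrank_Wspace : Module.finrank ℂ (Wspace d i N) = #(degreeWeightMonomials d i N) := by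
  rw [Wspace_eq_restrictSupport, Module.finrank_eq_card_basis (basisRestrictSupport ℂ _)]
  simp

end Wspace

section Operators

variable {d i N : ℕ}

lemma D1_X_of_pos {k : Fin (d + 1)} (hk : 0 < (k : ℕ)) :
    D1 d (X k) = ((k : ℕ) : ℂ) • X (⟨k - 1, by omega⟩ : Fin (d + 1)) := by
  rw [D1, mkDerivation_X, dif_pos hk]

lemma D1_X_zero : D1 d (X 0) = 0 := by
  rw [D1, mkDerivation_X, dif_neg (by simp)]

lemma D2_X_of_lt {k : Fin (d + 1)} (hk : (k : ℕ) < d) :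
    D2 d (X k) = ((d : ℂ) - k) • X (⟨k + 1, by omega⟩ : Fin (d + 1)) := by
  rw [D2, mkDerivation_X, dif_pos hk]

lemma D2_X_last : D2 d (X (Fin.last d)) = 0 := by
  rw [D2, mkDerivation_X, dif_neg (by simp)]

lemma D1_D2_X (k : Fin (d + 1)) : D1 d (D2 d (X k)) = (((d : ℂ) - k) * (k + 1)) • X k := by
  obtain hk | rfl := (Fin.le_last k).lt_or_eq
  · rw [D2_X_of_lt hk, Derivation.map_smul, D1_X_of_pos (Nat.succ_pos _), smul_smul]
    simp
  · simp [D2_X_last]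

lemma D2_D1_X (k : Fin (d + 1)) : D2 d (D1 d (X k)) = ((k : ℂ) * (d - k + 1)) • X k := by
  obtain rfl | hk := eq_or_ne k 0
  · simp [D1_X_zero]
  · have hk : 0 < (k : ℕ) := Nat.pos_of_ne_zero (Fin.val_ne_zero_iff.mpr hk)
    rw [D1_X_of_pos hk, Derivation.map_smul, D2_X_of_lt (by simp only; omega), smul_smul]
    congr 2
    · push_cast [Nat.cast_sub hk]
      ring
    · ext
      simp only
      omega

lemma lie_D1_D2_X (k : Fin (d + 1)) : ⁅D1 d, D2 d⁆ (X k) = ((d : ℂ) - 2 * k) • X k := by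
  rw [Derivation.commutator_apply, D1_D2_X, D2_D1_X, ← sub_smul]
  ring_nf

lemma isWeightedHomogeneous_D1_X (k : Fin (d + 1)) :
    (D1 d (X k)).IsWeightedHomogeneous (degreeWeight d) (degreeWeight d k + (0, -1)) := by
  obtain rfl | hk := eq_or_ne k 0
  · rw [D1_X_zero]
    exact isWeightedHomogeneous_zero ℂ _ _
  · have hk : 0 < (k : ℕ) := Nat.pos_of_ne_zero (Fin.val_ne_zero_iff.mpr hk)
    rw [D1_X_of_pos hk]
    refine (weightedHomogeneousSubmodule ℂ _ _).smul_mem _ ?_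
    convert isWeightedHomogeneous_X ℂ (degreeWeight d) (⟨k - 1, by omega⟩ : Fin (d + 1)) using 1
    simp [degreeWeight, Nat.cast_sub hk, sub_eq_add_neg]

lemma isWeightedHomogeneous_D2_X (k : Fin (d + 1)) :
    (D2 d (X k)).IsWeightedHomogeneous (degreeWeight d) (degreeWeight d k + (0, 1)) := by
  obtain hk | rfl := (Fin.le_last k).lt_or_eq
  · rw [D2_X_of_lt hk]
    refine (weightedHomogeneousSubmodule ℂ _ _).smul_mem _ ?_
    convert isWeightedHomogeneous_X ℂ (degreeWeight d) (⟨k + 1, by omega⟩ : Fin (d + 1)) using 1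
    simp [degreeWeight]
  · rw [D2_X_last]
    exact isWeightedHomogeneous_zero ℂ _ _

lemma D1_mem_Wspace {v : MvPolynomial (Fin (d + 1)) ℂ} (hv : v ∈ Wspace d i (N + 1)) :
    D1 d v ∈ Wspace d i N := by
  rw [Wspace_eq_weightedHomogeneousSubmodule] at hv ⊢
  convert hv.derivation_apply isWeightedHomogeneous_D1_X using 1
  simp

lemma D1_eq_zero_of_mem_Wspace_zero {v : MvPolynomial (Fin (d + 1)) ℂ} (hv : v ∈ Wspace d i 0) :
    D1 d v = 0 := by
  rw [Wspace_eq_weightedHomogeneousSubmodule] at hv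
  refine (hv.derivation_apply isWeightedHomogeneous_D1_X).eq_zero_of_no_monomials fun α hα => ?_
  have : 0 ≤ (weight (degreeWeight d) α).2 := by
    rw [weight_eq_sum, Prod.snd_sum]
    exact sum_nonneg fun k _ => by simp only [degreeWeight, Prod.smul_mk]; positivity
  simp [hα] at this

lemma D2_mem_Wspace {v : MvPolynomial (Fin (d + 1)) ℂ} (hv : v ∈ Wspace d i N) :
    D2 d v ∈ Wspace d i (N + 1) := by
  rw [Wspace_eq_weightedHomogeneousSubmodule] at hv ⊢
  convert hv.derivation_apply isWeightedHomogeneous_D2_X using 1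
  simp

lemma D1_D2_sub_D2_D1_of_mem_Wspace {v : MvPolynomial (Fin (d + 1)) ℂ} (hv : v ∈ Wspace d i N) :
    D1 d (D2 d v) - D2 d (D1 d v) = ((d * i - 2 * N : ℤ) : ℂ) • v := by
  let φ : ℕ × ℤ →+ ℂ := d • (Nat.castAddMonoidHom ℂ).comp (AddMonoidHom.fst ℕ ℤ) -
    2 • (Int.castAddHom ℂ).comp (AddMonoidHom.snd ℕ ℤ)
  rw [Wspace_eq_weightedHomogeneousSubmodule] at hv
  rw [← Derivation.commutator_apply,
    hv.derivation_apply_eq_smul φ fun k => by rw [lie_D1_D2_X]; simp [φ, degreeWeight]]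
  simp [φ]

end Operators

lemma finrank_Wspace_succ_inf_ker_D1_add {d i N : ℕ} (h : 2 * (N + 1) ≤ d * i) :
    Module.finrank ℂ ↥(Wspace d i (N + 1) ⊓ LinearMap.ker (D1 d).toLinearMap) +
      #(degreeWeightMonomials d i N) = #(degreeWeightMonomials d i (N + 1)) := by
  rw [← finrank_Wspace, ← finrank_Wspace]
  exact finrank_inf_ker_add_finrank (c := fun m => d * i - 2 * m) (fun _ _ => D1_mem_Wspace)
    (fun _ => D1_eq_zero_of_mem_Wspace_zero) (fun _ _ => D2_mem_Wspace)
    (fun _ _ => D1_D2_sub_D2_D1_of_mem_Wspace) fun m hm => by omega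

lemma finrank_Wspace_zero_inf_ker_D1 {d i : ℕ} :
    Module.finrank ℂ ↥(Wspace d i 0 ⊓ LinearMap.ker (D1 d).toLinearMap) =
      #(degreeWeightMonomials d i 0) := by
  rw [inf_eq_left.mpr fun v hv => D1_eq_zero_of_mem_Wspace_zero hv, finrank_Wspace]

theorem stmt6_general (d : ℕ) (P : MvPowerSeries (Fin 2) ℂ)
    (hP : ∀ i j : ℕ,
      MvPowerSeries.coeff (Finsupp.single 0 i + Finsupp.single 1 j) P = (gammaC d i j : ℂ)) :
    ∀ i m : ℕ,
      MvPowerSeries.coeff (Finsupp.single 0 i + Finsupp.single 1 m) P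
        = if m ≤ d * i then
            MvPowerSeries.coeff (Finsupp.single 0 i + Finsupp.single 1 (d * i - m))
              ((1 - (MvPowerSeries.X 1 : MvPowerSeries (Fin 2) ℂ) ^ 2) *
                ∏ k ∈ Finset.range (d + 1),
                  (1 - (MvPowerSeries.X 0 : MvPowerSeries (Fin 2) ℂ) *
                    (MvPowerSeries.X 1) ^ (2 * k))⁻¹)
          else 0 := by
  intro i m
  rw [hP]
  by_cases hm : m ≤ d * i
  swap
  · simp [gammaC, hm]
  rw [if_pos hm, MvPowerSeries.coeff_one_sub_X_one_pow_mul]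
  obtain ⟨N, hN | hN⟩ := Nat.even_or_odd' (d * i - m)
  · rw [gammaC, if_pos ⟨hm, by omega⟩, show (d * i - m) / 2 = N by omega, hN,
      coeff_prod_inv_one_sub_X_mul_X_pow_two_mul]
    cases N with
    | zero => simp [finrank_Wspace_zero_inf_ker_D1]
    | succ N =>
      rw [if_pos (by omega), show 2 * (N + 1) - 2 = 2 * N by omega,
        coeff_prod_inv_one_sub_X_mul_X_pow_two_mul,
        ← finrank_Wspace_succ_inf_ker_D1_add (by omega)]
      push_cast
      ring
  · rw [gammaC, if_neg (by omega), hN, coeff_prod_inv_one_sub_X_mul_X_pow_two_mul_add_one]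
    split_ifs
    · rw [show 2 * N + 1 - 2 = 2 * (N - 1) + 1 by omega,
        coeff_prod_inv_one_sub_X_mul_X_pow_two_mul_add_one]
      simp
    · simp

theorem stmt6 (d : ℕ) (hd : 1 ≤ d) (P : MvPowerSeries (Fin 2) ℂ)
    (hP : ∀ i j : ℕ,
      MvPowerSeries.coeff (Finsupp.single 0 i + Finsupp.single 1 j) P = (gammaC d i j : ℂ)) :
    ∀ i m : ℕ,
      MvPowerSeries.coeff (Finsupp.single 0 i + Finsupp.single 1 m) P
        = if m ≤ d * i then
            MvPowerSeries.coeff (Finsupp.single 0 i + Finsupp.single 1 (d * i - m))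
              ((1 - (MvPowerSeries.X 1 : MvPowerSeries (Fin 2) ℂ) ^ 2) *
                ∏ k ∈ Finset.range (d + 1),
                  (1 - (MvPowerSeries.X 0 : MvPowerSeries (Fin 2) ℂ) *
                    (MvPowerSeries.X 1) ^ (2 * k))⁻¹)
          else 0 :=
  stmt6_general d P hP
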